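/- arXiv:1804.06667 — 2 statements merged into one kernel-verified Lean document; each statement's English description precedes it below -/
import Mathlib

section
/- Suppose t ∈ C(C{a,b}) is such that every subtree of μ(t) has a port. Then some port name occurs at least twice in μ(t) if and only if some port name occurs at least twice in t, or some node of t is labeled by a term in which some port name occurs at least twice (kind 3). -/
namespace OmegaClone

/-- A (possibly infinite) raw tree over a ranked set `A`, with ports.
Positions are lists of child indices; a node is labeled either by a letter
`⟨k, x⟩` (a letter `x` of rank `k`, having `k` children `0,…,k-1`) or by a
port name `j ∈ ℕ` (a leaf). `none` means the position is not a node. -/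
def RawTree (A : ℕ → Type) : Type :=
  List ℕ → Option ((Σ k : ℕ, A k) ⊕ ℕ)

/-- `t` is a term of rank `n` over `A` (an element of rank `n` of `CA`):
the root exists and is not a port (excluding the trivial port-tree), a
position `w ++ [i]` is a node iff `w` is labeled by a letter of rank `> i`,
all port names are `< n`, and every port name `< n` occurs. -/
def IsTerm (A : ℕ → Type) (n : ℕ) (t : RawTree A) : Prop :=
  (∃ k x, t [] = some (Sum.inl ⟨k, x⟩)) ∧
  (∀ w i, (t (w ++ [i])).isSome ↔ ∃ k x, t w = some (Sum.inl ⟨k, x⟩) ∧ i < k) ∧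
  (∀ w j, t w = some (Sum.inr j) → j < n) ∧
  (∀ j, j < n → ∃ w, t w = some (Sum.inr j))

/-- Trees whose node labels are themselves raw trees over `A`
(i.e. raw trees over the ranked set `CA`). -/
abbrev OuterTree (A : ℕ → Type) : Type := RawTree (fun _ => RawTree A)

/-- `t ∈ C(CA)` has rank `n`: it is a term of rank `n` whose node labels are
terms of the rank given by the arity of the node. -/
def IsTerm2 (A : ℕ → Type) (n : ℕ) (t : OuterTree A) : Prop :=
  IsTerm (fun _ => RawTree A) n t ∧
  ∀ w k s, t w = some (Sum.inl ⟨k, s⟩) → IsTerm A k s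

/-- Auxiliary state for computing the flattening: either a pair
(node `v` of the outer tree, position `w` inside the label of `v`),
or a port name of the outer tree. -/
def resolve (A : ℕ → Type) (t : OuterTree A) (v : List ℕ) :
    Option ((List ℕ × List ℕ) ⊕ ℕ) :=
  match t v with
  | some (Sum.inl _) => some (Sum.inl (v, ([] : List ℕ)))
  | some (Sum.inr j) => some (Sum.inr j)
  | none => none

/-- One navigation step of the flattening: from the current state, move to
child number `i`; a port `j` occurring inside a label redirects to the
`j`-th child of the current outer node (substitution). -/
def stepF (A : ℕ → Type) (t : OuterTree A)
    (st : (List ℕ × List ℕ) ⊕ ℕ) (i : ℕ) :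
    Option ((List ℕ × List ℕ) ⊕ ℕ) :=
  match st with
  | Sum.inr _ => none
  | Sum.inl (v, w) =>
    match t v with
    | some (Sum.inl ⟨_, s⟩) =>
      match s (w ++ [i]) with
      | some (Sum.inl _) => some (Sum.inl (v, w ++ [i]))
      | some (Sum.inr j) => resolve A t (v ++ [j])
      | none => none
    | _ => none

/-- The flattening `μ : C(CA) → CA`: the label of `μ(t)` at a position `p` is
obtained by navigating through `t`, substituting (recursively) the flattened
child subtrees of each node into the ports of its label. -/
def flatten (A : ℕ → Type) (t : OuterTree A) : RawTree A :=
  fun p =>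
    (p.foldl (fun ost i => ost.bind (fun st => stepF A t st i))
        (resolve A t [])).bind
      (fun st =>
        match st with
        | Sum.inl (v, w) =>
          match t v with
          | some (Sum.inl ⟨_, s⟩) =>
            match s w with
            | some (Sum.inl x) => some (Sum.inl x)
            | _ => none
          | _ => none
        | Sum.inr j => some (Sum.inr j))

/-- The unit `η : A → CA`: a letter of rank `k` becomes the term with that
letter at the root and ports `0,…,k-1` as its children. -/
def unitRaw (A : ℕ → Type) (k : ℕ) (x : A k) : RawTree A :=
  fun p =>
    match p with
    | [] => some (Sum.inl ⟨k, x⟩)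
    | [i] => if i < k then some (Sum.inr i) else none
    | _ => none

/-- Action of `C` on (rank-preserving) functions: node-wise relabeling. -/
def cmap {A B : ℕ → Type} (h : ∀ k, A k → B k) (t : RawTree A) : RawTree B :=
  fun p => (t p).map (Sum.map (fun x => ⟨x.1, h x.1 x.2⟩) id)

/-- The subtree of `t` rooted at node `w`. -/
def subAt {A : ℕ → Type} (t : RawTree A) (w : List ℕ) : RawTree A :=
  fun u => t (w ++ u)

/-- `t` contains a port. -/
def HasPort {A : ℕ → Type} (t : RawTree A) : Prop :=
  ∃ w j, t w = some (Sum.inr j)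

/-- every subtree of `t` contains a port -/
def HasPortEverywhere {A : ℕ → Type} (t : RawTree A) : Prop :=
  ∀ w, (t w).isSome → HasPort (subAt t w)

/-- some port name occurs at least twice in `t` -/
def PortTwice {A : ℕ → Type} (t : RawTree A) : Prop :=
  ∃ w w' j, w ≠ w' ∧ t w = some (Sum.inr j) ∧ t w' = some (Sum.inr j)

/-- subtrees at distinct nodes of `t` are distinct -/
def Antiregular {A : ℕ → Type} (t : RawTree A) : Prop :=
  ∀ w w', (t w).isSome → (t w').isSome → subAt t w = subAt t w' → w = w'

/-- every node of `t` has a descendant whose subtree is antiregular -/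
def DenselyAntiregular {A : ℕ → Type} (t : RawTree A) : Prop :=
  ∀ w, (t w).isSome → ∃ u, (t (w ++ u)).isSome ∧ Antiregular (subAt t (w ++ u))

/-- the ranked alphabet `{a,b}`, both letters of rank `2` -/
inductive AB : Type | a : AB | b : AB

def abA : ℕ → Type
  | 2 => AB
  | _ => Empty

/-- kind 1: some subtree has no ports and is not densely antiregular -/
def Kind1 (s : RawTree abA) : Prop :=
  ∃ w, (s w).isSome ∧ ¬ HasPort (subAt s w) ∧ ¬ DenselyAntiregular (subAt s w)

/-- kind 2: some subtree has no ports and every portless subtree is densely antiregular -/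
def Kind2 (s : RawTree abA) : Prop :=
  (∃ w, (s w).isSome ∧ ¬ HasPort (subAt s w)) ∧
  ∀ w, (s w).isSome → ¬ HasPort (subAt s w) → DenselyAntiregular (subAt s w)

/-- kind 3: every subtree has a port and some port name is used at least twice -/
def Kind3 (s : RawTree abA) : Prop :=
  HasPortEverywhere s ∧ PortTwice s

/-- kind 4: every subtree has a port and no port name is used twice -/
def Kind4 (s : RawTree abA) : Prop :=
  HasPortEverywhere s ∧ ¬ PortTwice s

end OmegaClone

namespace OmegaClone

/-! ### Auxiliary development for the flattening lemma -/

/-- A simplified navigation state for the flattening: a pair (outer node `v`,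
position `w` inside the label of `v`); outer ports are represented as
`(v, [])` as well. -/
def step2 (t : OuterTree abA) (st : List ℕ × List ℕ) (i : ℕ) :
    Option (List ℕ × List ℕ) :=
  match t st.1 with
  | some (Sum.inl ⟨_, s⟩) =>
    match s (st.2 ++ [i]) with
    | some (Sum.inl _) => some (st.1, st.2 ++ [i])
    | some (Sum.inr j) =>
        if (t (st.1 ++ [j])).isSome then some (st.1 ++ [j], []) else none
    | none => none
  | _ => none

/-- The simplified state reached after navigating along `p`. -/
def st2 (t : OuterTree abA) (p : List ℕ) : Option (List ℕ × List ℕ) :=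
  p.foldl (fun o i => o.bind (fun st => step2 t st i))
    (if (t []).isSome then some (([] : List ℕ), ([] : List ℕ)) else none)

/-- Encoding of a simplified state as a state of `stepF`. -/
def enc (t : OuterTree abA) (st : List ℕ × List ℕ) :
    Option ((List ℕ × List ℕ) ⊕ ℕ) :=
  match t st.1 with
  | some (Sum.inl _) => some (Sum.inl st)
  | some (Sum.inr j) => some (Sum.inr j)
  | none => none

/-- The output label of the flattening at a simplified state. -/
def out (t : OuterTree abA) (st : List ℕ × List ℕ) :
    Option ((Σ k : ℕ, abA k) ⊕ ℕ) :=
  match t st.1 with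
  | some (Sum.inl ⟨_, s⟩) =>
    match s st.2 with
    | some (Sum.inl x) => some (Sum.inl x)
    | _ => none
  | some (Sum.inr j) => some (Sum.inr j)
  | none => none

lemma st2_nil (t : OuterTree abA) :
    st2 t [] = if (t []).isSome then some (([] : List ℕ), ([] : List ℕ)) else none := rfl

lemma st2_concat (t : OuterTree abA) (p : List ℕ) (i : ℕ) :
    st2 t (p ++ [i]) = (st2 t p).bind (fun st => step2 t st i) := by
  unfold st2; rw [List.foldl_append]; rfl

lemma st2_append (t : OuterTree abA) (p u : List ℕ) :
    st2 t (p ++ u)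
      = u.foldl (fun o i => o.bind (fun st => step2 t st i)) (st2 t p) := by
  unfold st2; rw [List.foldl_append]

lemma enc_step (t : OuterTree abA) (st : List ℕ × List ℕ) (i : ℕ) :
    (enc t st).bind (fun s => stepF abA t s i) = (step2 t st i).bind (enc t) := by
  obtain ⟨v, w⟩ := st
  rcases h1 : t v with _ | x
  · simp [enc, step2, h1]
  rcases x with ⟨k, s⟩ | j
  · rcases h2 : s (w ++ [i]) with _ | y
    · simp [enc, step2, stepF, h1, h2]
    rcases y with x | j
    · simp [enc, step2, stepF, h1, h2]
    · rcases h3 : t (v ++ [j]) with _ | z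
      · simp [enc, step2, stepF, resolve, h1, h2, h3]
      · rcases z with y | m <;> simp [enc, step2, stepF, resolve, h1, h2, h3]
  · simp [enc, step2, stepF, h1]

lemma fold_eq (t : OuterTree abA) :
    ∀ (p : List ℕ) (o : Option (List ℕ × List ℕ)),
      p.foldl (fun ost i => ost.bind (fun st => stepF abA t st i)) (o.bind (enc t))
        = (p.foldl (fun o i => o.bind (fun st => step2 t st i)) o).bind (enc t)
  | [], o => rfl
  | i :: p, o => by
    simp only [List.foldl_cons]
    have h : (o.bind (enc t)).bind (fun st => stepF abA t st i)
        = (o.bind (fun st => step2 t st i)).bind (enc t) := by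
      cases o with
      | none => rfl
      | some st => simpa using enc_step t st i
    rw [h, fold_eq t p]

lemma flatten_eq (t : OuterTree abA) (p : List ℕ) :
    flatten abA t p = (st2 t p).bind (out t) := by
  have hinit : resolve abA t []
      = (if (t []).isSome then some (([] : List ℕ), ([] : List ℕ)) else none).bind
          (enc t) := by
    rcases h : t [] with _ | x
    · simp [resolve, enc, h]
    · rcases x with ⟨k, s⟩ | j <;> simp [resolve, enc, h]
  show (p.foldl (fun ost i => ost.bind (fun st => stepF abA t st i))
      (resolve abA t [])).bind _ = _
  rw [hinit, fold_eq, Option.bind_assoc]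
  show (st2 t p).bind _ = _
  cases hs : st2 t p with
  | none => rfl
  | some st =>
    obtain ⟨v, w⟩ := st
    simp only [Option.bind_some]
    rcases h1 : t v with _ | x
    · simp [enc, out, h1]
    · rcases x with ⟨k, s⟩ | j
      · rcases h2 : s w with _ | y
        · simp [enc, out, h1, h2]
        · rcases y with x | j <;> simp [enc, out, h1, h2]
      · simp [enc, out, h1]

/-- Invariant of reachable states. -/
lemma st2_inv {n : ℕ} {t : OuterTree abA} (ht : IsTerm2 abA n t) :
    ∀ (p v w : List ℕ), st2 t p = some (v, w) →
      (t v).isSome ∧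
      (∀ k s, t v = some (Sum.inl ⟨k, s⟩) → ∃ k' x, s w = some (Sum.inl ⟨k', x⟩)) ∧
      (∀ j, t v = some (Sum.inr j) → w = []) := by
  intro p
  induction p using List.reverseRecOn with
  | nil =>
    intro v w h
    obtain ⟨k0, x0, hroot⟩ := ht.1.1
    rw [st2_nil, if_pos (by rw [hroot]; rfl)] at h
    obtain ⟨rfl, rfl⟩ : v = [] ∧ w = [] := by
      simpa [eq_comm] using h
    refine ⟨by rw [hroot]; rfl, ?_, ?_⟩
    · intro k s hks
      exact ((ht.2 [] k s hks).1)
    · intro j hj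
      simp [hroot] at hj
  | append_singleton p i IH =>
    intro v w h
    rw [st2_concat] at h
    cases hs : st2 t p with
    | none => rw [hs] at h; simp at h
    | some st =>
      obtain ⟨v0, w0⟩ := st
      rw [hs] at h
      simp only [Option.bind_some] at h
      rcases h1 : t v0 with _ | x
      · simp [step2, h1] at h
      rcases x with ⟨k, s⟩ | j
      · rcases h2 : s (w0 ++ [i]) with _ | y
        · simp [step2, h1, h2] at h
        rcases y with x | j
        · simp only [step2, h1, h2] at h
          obtain ⟨rfl, rfl⟩ : v0 = v ∧ w0 ++ [i] = w := by simpa using h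
          refine ⟨by rw [h1]; rfl, ?_, ?_⟩
          · intro k' s' hks
            rw [h1] at hks
            obtain ⟨rfl, hss⟩ : k = k' ∧ HEq s s' := by simpa using hks
            rw [← (heq_iff_eq.mp hss)]
            exact ⟨x.1, x.2, by rw [h2]⟩
          · intro j hj; rw [h1] at hj; simp at hj
        · simp only [step2, h1, h2] at h
          by_cases hc : (t (v0 ++ [j])).isSome
          · rw [if_pos hc] at h
            obtain ⟨rfl, rfl⟩ : v0 ++ [j] = v ∧ ([] : List ℕ) = w := by simpa using h
            refine ⟨hc, ?_, fun _ _ => rfl⟩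
            intro k' s' hks
            exact (ht.2 _ k' s' hks).1
          · rw [if_neg hc] at h; simp at h
      · simp [step2, h1] at h

/-- Navigation inside a single label. -/
lemma st2_inner {n : ℕ} {t : OuterTree abA} (ht : IsTerm2 abA n t) :
    ∀ (u p v w : List ℕ) (k : ℕ) (s : RawTree abA),
      st2 t p = some (v, w) → t v = some (Sum.inl ⟨k, s⟩) →
      (∃ k' x, s (w ++ u) = some (Sum.inl ⟨k', x⟩)) →
      st2 t (p ++ u) = some (v, w ++ u) := by
  intro u
  induction u using List.reverseRecOn with
  | nil => intro p v w k s hp hv _; simpa using hp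
  | append_singleton u i IH =>
    intro p v w k s hp hv hx
    obtain ⟨k', x, hx⟩ := hx
    rw [← List.append_assoc] at hx
    have hterm : IsTerm abA k s := ht.2 v k s hv
    have hsome : (s ((w ++ u) ++ [i])).isSome := by rw [hx]; rfl
    obtain ⟨k1, x1, h1, _⟩ := (hterm.2.1 (w ++ u) i).mp hsome
    have hIH : st2 t (p ++ u) = some (v, w ++ u) :=
      IH p v w k s hp hv ⟨k1, x1, h1⟩
    rw [← List.append_assoc, st2_concat, hIH]
    simp only [Option.bind_some, step2, hv, hx]
    rw [List.append_assoc]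

/-- Navigation through a port of a label enters the corresponding child. -/
lemma st2_innerPort {n : ℕ} {t : OuterTree abA} (ht : IsTerm2 abA n t)
    (p v w : List ℕ) (k : ℕ) (s : RawTree abA) (u : List ℕ) (j : ℕ)
    (hp : st2 t p = some (v, w)) (hv : t v = some (Sum.inl ⟨k, s⟩))
    (hu : s (w ++ u) = some (Sum.inr j)) (hj : (t (v ++ [j])).isSome) :
    st2 t (p ++ u) = some (v ++ [j], []) := by
  rcases u.eq_nil_or_concat with rfl | ⟨u', i, rfl⟩
  all_goals simp only [List.concat_eq_append] at *
  · exfalso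
    obtain ⟨k', x, hx⟩ := (st2_inv ht p v w hp).2.1 k s hv
    rw [List.append_nil] at hu
    rw [hu] at hx; simp at hx
  · rw [← List.append_assoc] at hu
    have hterm : IsTerm abA k s := ht.2 v k s hv
    have hsome : (s ((w ++ u') ++ [i])).isSome := by rw [hu]; rfl
    obtain ⟨k1, x1, h1, _⟩ := (hterm.2.1 (w ++ u') i).mp hsome
    have hIH : st2 t (p ++ u') = some (v, w ++ u') :=
      st2_inner ht u' p v w k s hp hv ⟨k1, x1, h1⟩
    rw [← List.append_assoc, st2_concat, hIH]
    simp only [Option.bind_some, step2, hv, hu, if_pos hj]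

/-- Every node of `t` is reachable by the flattening navigation. -/
lemma st2_reach {n : ℕ} {t : OuterTree abA} (ht : IsTerm2 abA n t) :
    ∀ v : List ℕ, (t v).isSome → ∃ p, st2 t p = some (v, []) := by
  intro v
  induction v using List.reverseRecOn with
  | nil => intro h; exact ⟨[], by rw [st2_nil, if_pos h]⟩
  | append_singleton v j IH =>
    intro h
    obtain ⟨k, r, hv, hjk⟩ := (ht.1.2.1 v j).mp h
    obtain ⟨p, hp⟩ := IH (by rw [hv]; rfl)
    obtain ⟨w1, hw1⟩ := (ht.2 v k r hv).2.2.2 j hjk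
    exact ⟨p ++ w1, st2_innerPort ht p v [] k r w1 j hp hv (by simpa using hw1) h⟩

/-- Characterization of ports of the flattening. -/
lemma flatten_port_iff {n : ℕ} {t : OuterTree abA} (ht : IsTerm2 abA n t)
    (p : List ℕ) (m : ℕ) :
    flatten abA t p = some (Sum.inr m) ↔
      ∃ v, st2 t p = some (v, []) ∧ t v = some (Sum.inr m) := by
  rw [flatten_eq]
  constructor
  · intro h
    cases hs : st2 t p with
    | none => rw [hs] at h; simp at h
    | some st =>
      obtain ⟨v, w⟩ := st
      rw [hs] at h
      simp only [Option.bind_some] at h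
      rcases h1 : t v with _ | x
      · simp [out, h1] at h
      rcases x with ⟨k, s⟩ | j
      · exfalso
        rcases h2 : s w with _ | y
        · simp [out, h1, h2] at h
        rcases y with x | j <;> simp [out, h1, h2] at h
      · have hjm : j = m := by simpa [out, h1] using h
        subst hjm
        have hw : w = [] := (st2_inv ht p v w hs).2.2 j h1
        subst hw
        exact ⟨v, rfl, h1⟩
  · rintro ⟨v, hs, hv⟩
    rw [hs]
    simp [out, hv]

lemma flatten_isSome {n : ℕ} {t : OuterTree abA} (ht : IsTerm2 abA n t)
    {p v w : List ℕ} (hs : st2 t p = some (v, w)) :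
    (flatten abA t p).isSome := by
  rw [flatten_eq, hs]
  simp only [Option.bind_some]
  have hinv := st2_inv ht p v w hs
  rcases h1 : t v with _ | x
  · rw [h1] at hinv; simp at hinv
  rcases x with ⟨k, s⟩ | j
  · obtain ⟨k', x, h2⟩ := hinv.2.1 k s h1
    simp [out, h1, h2]
  · simp [out, h1]

/-- Every reachable state decomposes as an entry point followed by an
inner position. -/
lemma st2_decomp {t : OuterTree abA} :
    ∀ (p v w : List ℕ), st2 t p = some (v, w) →
      ∃ q, p = q ++ w ∧ st2 t q = some (v, []) := by
  intro p
  induction p using List.reverseRecOn with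
  | nil =>
    intro v w h
    rw [st2_nil] at h
    by_cases hc : (t []).isSome
    · rw [if_pos hc] at h
      obtain ⟨rfl, rfl⟩ : v = [] ∧ w = [] := by simpa [eq_comm] using h
      exact ⟨[], rfl, by rw [st2_nil, if_pos hc]⟩
    · rw [if_neg hc] at h; simp at h
  | append_singleton p i IH =>
    intro v w h
    have h0 := h
    rw [st2_concat] at h
    cases hs : st2 t p with
    | none => rw [hs] at h; simp at h
    | some st =>
      obtain ⟨v0, w0⟩ := st
      rw [hs] at h
      simp only [Option.bind_some] at h
      rcases h1 : t v0 with _ | x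
      · simp [step2, h1] at h
      rcases x with ⟨k, s⟩ | j
      · rcases h2 : s (w0 ++ [i]) with _ | y
        · simp [step2, h1, h2] at h
        rcases y with x | j
        · simp only [step2, h1, h2] at h
          obtain ⟨rfl, rfl⟩ : v0 = v ∧ w0 ++ [i] = w := by simpa using h
          obtain ⟨q, rfl, hq⟩ := IH v0 w0 hs
          exact ⟨q, by rw [List.append_assoc], hq⟩
        · simp only [step2, h1, h2] at h
          by_cases hc : (t (v0 ++ [j])).isSome
          · rw [if_pos hc] at h
            obtain ⟨rfl, rfl⟩ : v0 ++ [j] = v ∧ ([] : List ℕ) = w := by simpa using h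
            exact ⟨p ++ [i], (List.append_nil _).symm, h0⟩
          · rw [if_neg hc] at h; simp at h
      · simp [step2, h1] at h

/-- The root is reachable only by the empty path. -/
lemma st2_entry_nil {t : OuterTree abA} :
    ∀ q : List ℕ, st2 t q = some ([], []) → q = [] := by
  intro q
  induction q using List.reverseRecOn with
  | nil => intro _; rfl
  | append_singleton q i IH =>
    intro h
    exfalso
    rw [st2_concat] at h
    cases hs : st2 t q with
    | none => rw [hs] at h; simp at h
    | some st =>
      obtain ⟨v0, w0⟩ := st
      rw [hs] at h
      simp only [Option.bind_some] at h
      rcases h1 : t v0 with _ | x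
      · simp [step2, h1] at h
      rcases x with ⟨k, s⟩ | j
      · rcases h2 : s (w0 ++ [i]) with _ | y
        · simp [step2, h1, h2] at h
        rcases y with x | j
        · simp [step2, h1, h2] at h
        · simp only [step2, h1, h2] at h
          by_cases hc : (t (v0 ++ [j])).isSome
          · rw [if_pos hc] at h; simp at h
          · rw [if_neg hc] at h; simp at h
      · simp [step2, h1] at h

/-- If no label duplicates a port name, each node has a unique entry path. -/
lemma st2_entry_unique {n : ℕ} {t : OuterTree abA} (ht : IsTerm2 abA n t)
    (hnd : ∀ v k r, t v = some (Sum.inl ⟨k, r⟩) → ¬ PortTwice r) :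
    ∀ (v q q' : List ℕ), st2 t q = some (v, []) → st2 t q' = some (v, []) →
      q = q' := by
  intro v
  induction v using List.reverseRecOn with
  | nil => intro q q' hq hq'; rw [st2_entry_nil q hq, st2_entry_nil q' hq']
  | append_singleton v j IH =>
    have key : ∀ q : List ℕ, st2 t q = some (v ++ [j], []) →
        ∃ (e w0 : List ℕ) (i k : ℕ) (s : RawTree abA),
          st2 t e = some (v, []) ∧ t v = some (Sum.inl ⟨k, s⟩) ∧
          s (w0 ++ [i]) = some (Sum.inr j) ∧ q = (e ++ w0) ++ [i] := by
      intro q h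
      rcases q.eq_nil_or_concat with rfl | ⟨q0, i, rfl⟩
      · exfalso
        rw [st2_nil] at h
        by_cases hc : (t []).isSome
        · rw [if_pos hc] at h
          have : ([] : List ℕ) = v ++ [j] := by simpa using h
          simp at this
        · rw [if_neg hc] at h; simp at h
      simp only [List.concat_eq_append] at h ⊢
      rw [st2_concat] at h
      cases hs : st2 t q0 with
      | none => rw [hs] at h; simp at h
      | some st =>
        obtain ⟨v0, w0⟩ := st
        rw [hs] at h
        simp only [Option.bind_some] at h
        rcases h1 : t v0 with _ | x
        · simp [step2, h1] at h
        rcases x with ⟨k, s⟩ | j'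
        · rcases h2 : s (w0 ++ [i]) with _ | y
          · simp [step2, h1, h2] at h
          rcases y with x | j0
          · simp [step2, h1, h2] at h
          · simp only [step2, h1, h2] at h
            by_cases hc : (t (v0 ++ [j0])).isSome
            · rw [if_pos hc] at h
              have hvj : v0 ++ [j0] = v ++ [j] := by simpa using h
              obtain ⟨rfl, hjj⟩ := List.append_inj' hvj rfl
              obtain rfl : j0 = j := by simpa using hjj
              obtain ⟨e, rfl, he⟩ := st2_decomp q0 v0 w0 hs
              exact ⟨e, w0, i, k, s, he, h1, h2, rfl⟩
            · rw [if_neg hc] at h; simp at h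
        · simp [step2, h1] at h
    intro q q' hq hq'
    obtain ⟨e, w0, i, k, s, he, hv, hport, rfl⟩ := key q hq
    obtain ⟨e', w0', i', k', s', he', hv', hport', rfl⟩ := key q' hq'
    rw [hv] at hv'
    obtain ⟨rfl, hss⟩ : k = k' ∧ HEq s s' := by simpa using hv'
    rw [← (heq_iff_eq.mp hss)] at hport'
    have hpos : w0 ++ [i] = w0' ++ [i'] := by
      by_contra hne
      exact hnd v k s hv ⟨w0 ++ [i], w0' ++ [i'], j, hne, hport, hport'⟩
    obtain ⟨rfl, hii⟩ := List.append_inj' hpos rfl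
    obtain rfl : i = i' := by simpa using hii
    rw [IH e e' he he']

/-- Lemma 5 of the paper: if every subtree of `μ(t)` has a port,
then some port name occurs at least twice in `μ(t)` iff some port name occurs
at least twice in `t`, or some node of `t` is labeled by a term in which some
port name occurs at least twice (kind 3). -/
theorem flatten_portTwice_iff
    (n : ℕ) (t : OuterTree abA) (ht : IsTerm2 abA n t)
    (hp : HasPortEverywhere (flatten abA t)) :
    PortTwice (flatten abA t) ↔
      (PortTwice t ∨
       ∃ (v : List ℕ) (k : ℕ) (r : RawTree abA),
         t v = some (Sum.inl ⟨k, r⟩) ∧ PortTwice r) := by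
  constructor
  · rintro ⟨p, p', m, hne, h1, h2⟩
    obtain ⟨v, hsv, htv⟩ := (flatten_port_iff ht p m).mp h1
    obtain ⟨v', hsv', htv'⟩ := (flatten_port_iff ht p' m).mp h2
    by_cases hl : ∃ (v : List ℕ) (k : ℕ) (r : RawTree abA),
        t v = some (Sum.inl ⟨k, r⟩) ∧ PortTwice r
    · exact Or.inr hl
    · push_neg at hl
      have hnd : ∀ v k r, t v = some (Sum.inl ⟨k, r⟩) → ¬ PortTwice r := by
        intro v k r hr hpt
        exact (hl v k r hr) hpt
      left
      refine ⟨v, v', m, ?_, htv, htv'⟩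
      intro hvv
      subst hvv
      exact hne (st2_entry_unique ht hnd v p p' hsv hsv')
  · rintro (⟨w, w', j, hne, h1, h2⟩ | ⟨v, k, r, hv, w1, w2, j, hww, h1, h2⟩)
    · obtain ⟨p, hp1⟩ := st2_reach ht w (by rw [h1]; rfl)
      obtain ⟨p', hp2⟩ := st2_reach ht w' (by rw [h2]; rfl)
      refine ⟨p, p', j, ?_, (flatten_port_iff ht p j).mpr ⟨w, hp1, h1⟩,
        (flatten_port_iff ht p' j).mpr ⟨w', hp2, h2⟩⟩
      intro hpp
      subst hpp
      rw [hp1] at hp2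
      simp only [Option.some.injEq, Prod.mk.injEq] at hp2
      exact hne hp2.1
    · obtain ⟨p, hpe⟩ := st2_reach ht v (by rw [hv]; rfl)
      have hjk : j < k := (ht.2 v k r hv).2.2.1 w1 j h1
      have hsome : (t (v ++ [j])).isSome := (ht.1.2.1 v j).mpr ⟨k, r, hv, hjk⟩
      have hA : st2 t (p ++ w1) = some (v ++ [j], []) :=
        st2_innerPort ht p v [] k r w1 j hpe hv (by simpa using h1) hsome
      have hB : st2 t (p ++ w2) = some (v ++ [j], []) :=
        st2_innerPort ht p v [] k r w2 j hpe hv (by simpa using h2) hsome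
      obtain ⟨u, m, hum⟩ := hp (p ++ w1) (flatten_isSome ht hA)
      have hum1 : flatten abA t ((p ++ w1) ++ u) = some (Sum.inr m) := hum
      have hsame : st2 t ((p ++ w1) ++ u) = st2 t ((p ++ w2) ++ u) := by
        rw [st2_append t (p ++ w1) u, st2_append t (p ++ w2) u, hA, hB]
      have hum2 : flatten abA t ((p ++ w2) ++ u) = some (Sum.inr m) := by
        rw [flatten_eq, ← hsame, ← flatten_eq]
        exact hum1
      refine ⟨(p ++ w1) ++ u, (p ++ w2) ++ u, m, ?_, hum1, hum2⟩
      intro heq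
      rw [List.append_assoc, List.append_assoc] at heq
      exact hww (List.append_cancel_right (List.append_cancel_left heq))

end OmegaClone
end

section
/- For t ∈ C(C{a,b}): if no node of t is of kind 1, every subtree of t has a port, and some node of t is of kind 2, then μ(t) is of kind 2. -/
/-!
The flattening is computed by a walk through `t`: a position of `μ(t)` corresponds to a
position `w` inside the label `s` of a node `v` of `t`, and leaving `s` through a port `j`
continues at the root of the `j`-th child of `v`; every node of `t` is reached by this walk.
Hence the subtree of `μ(t)` at such a position is a copy of `s|_w` when the latter has no port,
and otherwise contains the flattening of a child subtree `t|_{vj}`, which has a port because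
every subtree of `t` has one. So the portless subtrees of `μ(t)` are exactly the copies of
portless subtrees of node labels: some exist since some label is of kind 2, and all are
densely antiregular since no label is of kind 1.
-/

namespace OmegaClone

theorem exists_eq_letter_of_not_hasPort_subAt {B : ℕ → Type} {x : RawTree B} {w : List ℕ}
    (hw : (x w).isSome) (hnp : ¬ HasPort (subAt x w)) : ∃ y, x w = some (Sum.inl y) := by
  rcases h : x w with _ | ⟨y | j⟩
  · simp [h] at hw
  · exact ⟨y, rfl⟩
  · exact absurd ⟨[], j, by simpa only [subAt, List.append_nil] using h⟩ hnp

theorem hasPort_subAt_of_hasPort_subAt_append {B : ℕ → Type} {x : RawTree B} {w u : List ℕ}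
    (h : HasPort (subAt x (w ++ u))) : HasPort (subAt x w) := by
  obtain ⟨w', j, hw'⟩ := h
  exact ⟨u ++ w', j, by simpa only [subAt, List.append_assoc] using hw'⟩

section Flatten

variable {A : ℕ → Type} {t : OuterTree A}

def nav (A : ℕ → Type) (t : OuterTree A) (p : List ℕ) :
    Option ((List ℕ × List ℕ) ⊕ ℕ) :=
  p.foldl (fun ost i => ost.bind (fun st => stepF A t st i)) (resolve A t [])

def stateLabel (A : ℕ → Type) (t : OuterTree A) :
    (List ℕ × List ℕ) ⊕ ℕ → Option ((Σ k : ℕ, A k) ⊕ ℕ)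
  | Sum.inl (v, w) =>
    match t v with
    | some (Sum.inl ⟨_, s⟩) =>
      match s w with
      | some (Sum.inl x) => some (Sum.inl x)
      | _ => none
    | _ => none
  | Sum.inr j => some (Sum.inr j)

theorem flatten_eq_bind_nav (t : OuterTree A) (p : List ℕ) :
    flatten A t p = (nav A t p).bind (stateLabel A t) := rfl

theorem nav_nil (t : OuterTree A) : nav A t [] = resolve A t [] := rfl

theorem nav_append_singleton (t : OuterTree A) (p : List ℕ) (i : ℕ) :
    nav A t (p ++ [i]) = (nav A t p).bind (fun st => stepF A t st i) := by
  simp only [nav, List.foldl_append, List.foldl_cons, List.foldl_nil]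

theorem resolve_eq_of_label {v : List ℕ} {k : ℕ} {s : RawTree A}
    (hv : t v = some (Sum.inl ⟨k, s⟩)) : resolve A t v = some (Sum.inl (v, [])) := by
  simp only [resolve, hv]

theorem exists_nav_of_flatten_eq_letter {p : List ℕ} {x : Σ k, A k}
    (h : flatten A t p = some (Sum.inl x)) :
    ∃ v w k s, nav A t p = some (Sum.inl (v, w)) ∧ t v = some (Sum.inl ⟨k, s⟩) ∧
      s w = some (Sum.inl x) := by
  rw [flatten_eq_bind_nav] at h
  obtain ⟨⟨v, w⟩ | j, hp, hst⟩ := Option.bind_eq_some_iff.mp h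
  · rcases hv : t v with _ | ⟨⟨k, s⟩ | j⟩ <;> simp only [stateLabel, hv, reduceCtorEq] at hst
    rcases hw : s w with _ | ⟨y | j⟩ <;>
      simp only [hw, reduceCtorEq, Option.some.injEq, Sum.inl.injEq] at hst
    exact ⟨v, w, k, s, hp, hv, hst ▸ hw⟩
  · simp [stateLabel] at hst

section Label

variable {p v w : List ℕ} {k : ℕ} {s : RawTree A}
  (hp : nav A t p = some (Sum.inl (v, w))) (hv : t v = some (Sum.inl ⟨k, s⟩))
include hp hv

theorem nav_append_of_label_letter (hs : IsTerm A k s) :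
    ∀ (u : List ℕ) {x : Σ k, A k}, s (w ++ u) = some (Sum.inl x) →
      nav A t (p ++ u) = some (Sum.inl (v, w ++ u)) := by
  intro u
  induction u using List.reverseRecOn with
  | nil => intro _ _; simpa only [List.append_nil] using hp
  | append_singleton u i ih =>
    intro x hx
    obtain ⟨k', y, hy, -⟩ := (hs.2.1 (w ++ u) i).mp (by simp [hx])
    rw [← List.append_assoc, nav_append_singleton, ih hy, Option.bind_some]
    simp only [stepF, hv, List.append_assoc, hx]

theorem nav_append_of_label_port (hs : IsTerm A k s) {u : List ℕ} {i j : ℕ}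
    (hj : s (w ++ (u ++ [i])) = some (Sum.inr j)) :
    nav A t (p ++ (u ++ [i])) = resolve A t (v ++ [j]) := by
  rw [← List.append_assoc] at hj ⊢
  obtain ⟨k', y, hy, -⟩ := (hs.2.1 (w ++ u) i).mp (by simp only [hj, Option.isSome_some])
  rw [nav_append_singleton, nav_append_of_label_letter hp hv hs u hy, Option.bind_some]
  simp only [stepF, hv, hj]

theorem nav_append_eq_none_of_not_hasPort (hs : IsTerm A k s) (hw : (s w).isSome)
    (hnp : ¬ HasPort (subAt s w)) :
    ∀ u : List ℕ, s (w ++ u) = none → nav A t (p ++ u) = none := by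
  intro u
  induction u using List.reverseRecOn with
  | nil => intro h; rw [List.append_nil] at h; simp [h] at hw
  | append_singleton u i ih =>
    intro hnone
    rw [← List.append_assoc, nav_append_singleton]
    obtain ⟨_ | ⟨y | j⟩, hu⟩ : ∃ y, s (w ++ u) = y := ⟨_, rfl⟩
    · rw [ih hu, Option.bind_none]
    · rw [nav_append_of_label_letter hp hv hs u hu, Option.bind_some]
      simp only [stepF, hv, List.append_assoc, hnone]
    · exact absurd ⟨u, j, hu⟩ hnp

theorem subAt_flatten_eq_of_not_hasPort (hs : IsTerm A k s) (hw : (s w).isSome)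
    (hnp : ¬ HasPort (subAt s w)) : subAt (flatten A t) p = subAt s w := by
  funext u
  change flatten A t (p ++ u) = s (w ++ u)
  rw [flatten_eq_bind_nav]
  rcases hu : s (w ++ u) with _ | ⟨x | j⟩
  · rw [nav_append_eq_none_of_not_hasPort hp hv hs hw hnp u hu, Option.bind_none]
  · rw [nav_append_of_label_letter hp hv hs u hu, Option.bind_some]
    simp only [stateLabel, hv, hu]
  · exact absurd ⟨u, j, hu⟩ hnp

end Label

section Reach

variable {n : ℕ} (ht : IsTerm2 A n t)
include ht

theorem exists_nav_append_eq_resolve_append {p v : List ℕ} (hp : nav A t p = resolve A t v) :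
    ∀ u : List ℕ, (t (v ++ u)).isSome → ∃ q, nav A t (p ++ q) = resolve A t (v ++ u) := by
  intro u
  induction u using List.reverseRecOn with
  | nil => intro _; exact ⟨[], by simpa only [List.append_nil] using hp⟩
  | append_singleton u i ih =>
    intro hsome
    obtain ⟨k, s, hu, hik⟩ :=
      (ht.1.2.1 (v ++ u) i).mp (by simpa only [List.append_assoc] using hsome)
    obtain ⟨q, hq⟩ := ih (by simp only [hu, Option.isSome_some])
    have hs : IsTerm A k s := ht.2 _ k s hu
    obtain ⟨w, hw⟩ := hs.2.2.2 i hik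
    obtain rfl | ⟨w, i', rfl⟩ := w.eq_nil_or_concat'
    · obtain ⟨_, _, hroot⟩ := hs.1
      simp [hroot] at hw
    · have hnav := nav_append_of_label_port (hq.trans (resolve_eq_of_label hu)) hu hs
        (u := w) (i := i') (by rwa [List.nil_append])
      exact ⟨q ++ (w ++ [i']), by simpa only [List.append_assoc] using hnav⟩

theorem hasPort_subAt_flatten_of_nav_eq_resolve {p v : List ℕ}
    (hp : nav A t p = resolve A t v) (h : HasPort (subAt t v)) :
    HasPort (subAt (flatten A t) p) := by
  obtain ⟨u, j, hu⟩ := h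
  obtain ⟨q, hq⟩ := exists_nav_append_eq_resolve_append ht hp u
    (by simp only [subAt] at hu; simp only [hu, Option.isSome_some])
  refine ⟨q, j, ?_⟩
  change flatten A t (p ++ q) = _
  simp only [subAt] at hu
  simp only [flatten_eq_bind_nav, hq, resolve, hu, Option.bind_some, stateLabel]

theorem not_hasPort_label_of_not_hasPort_subAt_flatten (hports : HasPortEverywhere t)
    {p v w : List ℕ} {k : ℕ} {s : RawTree A} {x : Σ k, A k}
    (hp : nav A t p = some (Sum.inl (v, w))) (hv : t v = some (Sum.inl ⟨k, s⟩))
    (hw : s w = some (Sum.inl x)) (h : ¬ HasPort (subAt (flatten A t) p)) :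
    ¬ HasPort (subAt s w) := by
  rintro ⟨u, j, hj⟩
  have hs : IsTerm A k s := ht.2 v k s hv
  obtain rfl | ⟨u, i, rfl⟩ := u.eq_nil_or_concat'
  · simp [subAt, hw] at hj
  · change s (w ++ (u ++ [i])) = _ at hj
    have hchild : (t (v ++ [j])).isSome := (ht.1.2.1 v j).mpr ⟨k, s, hv, hs.2.2.1 _ j hj⟩
    -- leaving the label through port `j` enters the flattening of the `j`-th child
    exact h (hasPort_subAt_of_hasPort_subAt_append (hasPort_subAt_flatten_of_nav_eq_resolve ht
      (nav_append_of_label_port hp hv hs hj) (hports _ hchild)))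

theorem exists_subAt_flatten_eq_subAt_label {v w : List ℕ} {k : ℕ} {r : RawTree A}
    (hv : t v = some (Sum.inl ⟨k, r⟩)) (hw : (r w).isSome) (hnp : ¬ HasPort (subAt r w)) :
    ∃ p, (flatten A t p).isSome ∧ subAt (flatten A t) p = subAt r w := by
  have hr : IsTerm A k r := ht.2 v k r hv
  obtain ⟨q, hq⟩ := exists_nav_append_eq_resolve_append ht (nav_nil t) v (by simp [hv])
  rw [List.nil_append, List.nil_append, resolve_eq_of_label hv] at hq
  obtain ⟨x, hx⟩ := exists_eq_letter_of_not_hasPort_subAt hw hnp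
  have hnav := nav_append_of_label_letter hq hv hr w (by rwa [List.nil_append])
  rw [List.nil_append] at hnav
  have heq := subAt_flatten_eq_of_not_hasPort hnav hv hr hw hnp
  have hroot : flatten A t (q ++ w) = r w := by
    simpa only [subAt, List.append_nil] using congrFun heq []
  exact ⟨q ++ w, by rwa [hroot], heq⟩

theorem exists_label_subAt_eq_subAt_flatten (hports : HasPortEverywhere t) {p : List ℕ}
    (hp : (flatten A t p).isSome) (hnp : ¬ HasPort (subAt (flatten A t) p)) :
    ∃ v k s w, t v = some (Sum.inl ⟨k, s⟩) ∧ (s w).isSome ∧ ¬ HasPort (subAt s w) ∧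
      subAt (flatten A t) p = subAt s w := by
  obtain ⟨x, hx⟩ := exists_eq_letter_of_not_hasPort_subAt hp hnp
  obtain ⟨v, w, k, s, hnav, hv, hw⟩ := exists_nav_of_flatten_eq_letter hx
  have hnps := not_hasPort_label_of_not_hasPort_subAt_flatten ht hports hnav hv hw hnp
  have hws : (s w).isSome := by simp [hw]
  exact ⟨v, k, s, w, hv, hws, hnps, subAt_flatten_eq_of_not_hasPort hnav hv (ht.2 v k s hv) hws hnps⟩

end Reach

end Flatten

/-- Corollary, case (d): if no node of `t` is of kind 1, every
subtree of `t` has a port, and some node of `t` is of kind 2, then `μ(t)` is of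
kind 2. -/
theorem flatten_kind2
    (n : ℕ) (t : OuterTree abA) (ht : IsTerm2 abA n t)
    (h1 : ∀ (v : List ℕ) (k : ℕ) (r : RawTree abA),
        t v = some (Sum.inl ⟨k, r⟩) → ¬ Kind1 r)
    (h2 : HasPortEverywhere t)
    (h3 : ∃ (v : List ℕ) (k : ℕ) (r : RawTree abA),
        t v = some (Sum.inl ⟨k, r⟩) ∧ Kind2 r) :
    Kind2 (flatten abA t) := by
  refine ⟨?_, fun p hp hnp => ?_⟩
  · obtain ⟨v, k, r, hv, ⟨w, hw, hnp⟩, -⟩ := h3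
    obtain ⟨p, hp, heq⟩ := exists_subAt_flatten_eq_subAt_label ht hv hw hnp
    exact ⟨p, hp, heq ▸ hnp⟩
  · obtain ⟨v, k, s, w, hv, hw, hnps, heq⟩ := exists_label_subAt_eq_subAt_flatten ht h2 hp hnp
    rw [heq]
    by_contra hda
    exact h1 v k s hv ⟨w, hw, hnps, hda⟩

end OmegaClone
end
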